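/- Let n ≥ 1 be an integer, M > 1, 0 < a' < b', s > 1 and c > 0. For h ∈ (0, 1], define V₊(h) as the set of pairs (k, k') with k = ℓ + n/2, k' = ℓ' + n/2 for some ℓ, ℓ' ∈ ℕ, such that k < k', a'/h² ≤ k k' ≤ b'/h², and 1/M ≤ k/k' ≤ M. Then there exist ε₀ ∈ (0, 1) and γ ∈ (0, 1), depending only on n, M, a', b', s and c, such that for every h ∈ (0, ε₀], every t ∈ [h², c·h^s] and every ω ∈ [0, 2π), at least one of the following holds: (I) dist((tk + ω)/(2π), ℤ) ≥ γ t k for all (k, k') ∈ V₊(h); (II) dist((ω − tk')/(2π), ℤ) ≥ γ t k' for all (k, k') ∈ V₊(h). -/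
import Mathlib


/-- Membership in the index set `V₊(h)`: `(k,k') = (ℓ + n/2, ℓ' + n/2)` for some
`ℓ, ℓ' ∈ ℕ`, with `k < k'`, `a'/h² ≤ kk' ≤ b'/h²` and `1/M ≤ k/k' ≤ M`. -/
def memVplus (n : ℕ) (M a' b' h k k' : ℝ) : Prop :=
  (∃ ℓ : ℕ, k = (ℓ : ℝ) + (n : ℝ) / 2) ∧ (∃ ℓ' : ℕ, k' = (ℓ' : ℝ) + (n : ℝ) / 2) ∧
    k < k' ∧ a' / h ^ 2 ≤ k * k' ∧ k * k' ≤ b' / h ^ 2 ∧ 1 / M ≤ k / k' ∧ k / k' ≤ M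

/-- Dichotomy for the phase: there exist `ε₀, γ ∈ (0,1)` such that for all `h ∈ (0,ε₀]`,
`t ∈ [h², c·h^s]` and `ω ∈ [0,2π)`, either `dist((tk+ω)/2π, ℤ) ≥ γtk` for all
`(k,k') ∈ V₊(h)`, or `dist((ω−tk')/2π, ℤ) ≥ γtk'` for all `(k,k') ∈ V₊(h)`. -/
theorem phase_dichotomy (n : ℕ) (hn : 1 ≤ n) (M a' b' s c : ℝ)
    (hM : 1 < M) (ha' : 0 < a') (hab : a' < b') (hs : 1 < s) (hc : 0 < c) :
    ∃ ε₀ ∈ Set.Ioo (0 : ℝ) 1, ∃ γ ∈ Set.Ioo (0 : ℝ) 1,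
      ∀ h ∈ Set.Ioc (0 : ℝ) ε₀, ∀ t ∈ Set.Icc (h ^ 2) (c * h ^ s),
        ∀ ω ∈ Set.Ico (0 : ℝ) (2 * Real.pi),
        (∀ k k' : ℝ, memVplus n M a' b' h k k' →
            ∀ m : ℤ, γ * t * k ≤ |(t * k + ω) / (2 * Real.pi) - m|) ∨
        (∀ k k' : ℝ, memVplus n M a' b' h k k' →
            ∀ m : ℤ, γ * t * k' ≤ |(ω - t * k') / (2 * Real.pi) - m|) := by
  have hpi : (3:ℝ) < Real.pi := Real.pi_gt_three
  have hpi0 : (0:ℝ) < Real.pi := by linarith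
  have hb' : 0 < b' := ha'.trans hab
  have hM0 : (0:ℝ) < M := by linarith
  have hMb : 0 < M * b' := by positivity
  have hsq0 : 0 < Real.sqrt (M * b') := Real.sqrt_pos.mpr hMb
  set K := c * Real.sqrt (M * b') with hKdef
  have hK0 : 0 < K := by positivity
  set D := min 1 (1 / (2 * K)) with hDdef
  have hD0 : 0 < D := by positivity
  have hs0 : (0:ℝ) < s - 1 := by linarith
  set X := D ^ (1 / (s - 1)) with hXdef
  have hX0 : 0 < X := Real.rpow_pos_of_pos hD0 _
  refine ⟨min (1/2) X, ⟨lt_min (by norm_num) hX0,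
      lt_of_le_of_lt (min_le_left _ _) (by norm_num)⟩,
    1/(2*Real.pi), ⟨by positivity, by rw [div_lt_one (by positivity)]; linarith⟩, ?_⟩
  intro h hh t ht ω hω
  obtain ⟨hh0, hhε⟩ := hh
  obtain ⟨ht1, ht2⟩ := ht
  obtain ⟨hω0, hω2⟩ := hω
  have ht0 : 0 < t := lt_of_lt_of_le (by positivity) ht1
  have hhX : h ≤ X := hhε.trans (min_le_right _ _)
  have hrp : h ^ (s-1) ≤ 1/(2*K) := by
    calc h ^ (s-1) ≤ X ^ (s-1) := Real.rpow_le_rpow hh0.le hhX hs0.le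
      _ = D := by
          rw [hXdef, ← Real.rpow_mul hD0.le, one_div_mul_cancel hs0.ne', Real.rpow_one]
      _ ≤ 1/(2*K) := min_le_right _ _
  have key : ∀ k k' : ℝ, memVplus n M a' b' h k k' → 0 < k ∧ k < k' ∧ t * k' ≤ 1/2 := by
    intro k k' hm
    obtain ⟨⟨ℓ, hk⟩, ⟨ℓ', hk'⟩, hkk, hab1, hab2, hr1, hr2⟩ := hm
    have hn1 : (1:ℝ) ≤ (n:ℝ) := by exact_mod_cast hn
    have hℓ0 : (0:ℝ) ≤ (ℓ:ℝ) := Nat.cast_nonneg _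
    have hk0 : 0 < k := by rw [hk]; linarith
    have hk'0 : 0 < k' := hk0.trans hkk
    refine ⟨hk0, hkk, ?_⟩
    have hMk : k' ≤ M * k := by
      rw [div_le_div_iff₀ hM0 hk'0] at hr1
      linarith
    have hh2 : (0:ℝ) < h^2 := by positivity
    have hab2' : (k * k') * h^2 ≤ b' := (le_div_iff₀ hh2).mp hab2
    have hksq : (k' * h)^2 ≤ M * b' := by
      nlinarith [mul_le_mul_of_nonneg_right hMk (by positivity : (0:ℝ) ≤ k' * h^2),
        mul_le_mul_of_nonneg_left hab2' hM0.le]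
    have hk'h : k' * h ≤ Real.sqrt (M * b') := by
      rw [← Real.sqrt_sq (by positivity : (0:ℝ) ≤ k' * h)]
      exact Real.sqrt_le_sqrt hksq
    have hk'b : k' ≤ Real.sqrt (M*b') / h := (le_div_iff₀ hh0).mpr hk'h
    have h1 : t * k' ≤ (c * h ^ s) * (Real.sqrt (M*b') / h) :=
      mul_le_mul ht2 hk'b hk'0.le (by positivity)
    have h2 : (c * h ^ s) * (Real.sqrt (M*b') / h) = K * h ^ (s-1) := by
      rw [Real.rpow_sub hh0, Real.rpow_one, hKdef]; ring
    have h3 : K * h^(s-1) ≤ K * (1/(2*K)) := mul_le_mul_of_nonneg_left hrp hK0.le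
    have h4 : K * (1/(2*K)) = 1/2 := by field_simp
    rw [h2] at h1
    linarith
  rcases le_or_gt ω Real.pi with hωπ | hωπ
  · left
    intro k k' hm m
    obtain ⟨hk0, hkk, hb2⟩ := key k k' hm
    have htk : t * k ≤ 1/2 :=
      le_trans (mul_le_mul_of_nonneg_left hkk.le ht0.le) hb2
    set x := (t * k + ω) / (2 * Real.pi) with hx
    have hgx : 1/(2*Real.pi) * t * k ≤ x := by
      have hd : x - 1/(2*Real.pi)*t*k = ω/(2*Real.pi) := by rw [hx]; ring
      have : (0:ℝ) ≤ ω/(2*Real.pi) := by positivity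
      linarith
    have hg : 1/(2*Real.pi)*t*k ≤ 1/12 := by
      have h6 : 1/(2*Real.pi) ≤ 1/6 := by
        rw [div_le_div_iff₀ (by positivity) (by norm_num)]; linarith
      calc 1/(2*Real.pi)*t*k = 1/(2*Real.pi)*(t*k) := by ring
        _ ≤ 1/6*(t*k) := mul_le_mul_of_nonneg_right h6 (mul_pos ht0 hk0).le
        _ ≤ 1/6*(1/2) := mul_le_mul_of_nonneg_left htk (by norm_num)
        _ ≤ 1/12 := by norm_num
    have hx34 : x ≤ 3/4 := by
      rw [hx, div_le_iff₀ (by positivity)]; linarith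
    rcases le_or_gt m 0 with hm0 | hm0
    · have hm0' : (m:ℝ) ≤ 0 := by exact_mod_cast hm0
      calc 1/(2*Real.pi)*t*k ≤ x - m := by linarith
        _ ≤ |x - m| := le_abs_self _
    · have hm1 : (1:ℝ) ≤ (m:ℝ) := by exact_mod_cast hm0
      have habs := neg_le_abs (x - (m:ℝ))
      linarith
  · right
    intro k k' hm m
    obtain ⟨hk0, hkk, hb2⟩ := key k k' hm
    have hk'0 : 0 < k' := hk0.trans hkk
    set x := (ω - t * k') / (2 * Real.pi) with hx
    have hx14 : 1/4 ≤ x := by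
      rw [hx, le_div_iff₀ (by positivity)]; linarith
    have hg : 1/(2*Real.pi)*t*k' ≤ 1/12 := by
      have h6 : 1/(2*Real.pi) ≤ 1/6 := by
        rw [div_le_div_iff₀ (by positivity) (by norm_num)]; linarith
      calc 1/(2*Real.pi)*t*k' = 1/(2*Real.pi)*(t*k') := by ring
        _ ≤ 1/6*(t*k') := mul_le_mul_of_nonneg_right h6 (mul_pos ht0 hk'0).le
        _ ≤ 1/6*(1/2) := mul_le_mul_of_nonneg_left hb2 (by norm_num)
        _ ≤ 1/12 := by norm_num
    have hgsum : 1/(2*Real.pi)*t*k' + x ≤ 1 := by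
      have h1 : 1/(2*Real.pi)*t*k' + x = ω/(2*Real.pi) := by rw [hx]; ring
      rw [h1, div_le_one (by positivity)]; linarith
    rcases le_or_gt m 0 with hm0 | hm0
    · have hm0' : (m:ℝ) ≤ 0 := by exact_mod_cast hm0
      calc 1/(2*Real.pi)*t*k' ≤ x - m := by linarith
        _ ≤ |x - m| := le_abs_self _
    · have hm1 : (1:ℝ) ≤ (m:ℝ) := by exact_mod_cast hm0
      have habs := neg_le_abs (x - (m:ℝ))
      linarith
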